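/- arXiv:1309.0367 — 3 statements merged into one kernel-verified Lean document; each statement's English description precedes it below -/
import Mathlib

section
/- Let H be a real Hilbert space with triple product {x,y,z} = (1/2)(⟨x,y⟩z + ⟨z,y⟩x). If a bounded linear map T : H → H satisfies T{x,x,x} = 2{T x, x, x} + {x, T x, x} for all x ∈ H, then T is skew-adjoint, i.e. ⟨T x, x⟩ = 0 for all x ∈ H. -/
open RealInnerProductSpace

noncomputable def tpI {H : Type*} [NormedAddCommGroup H] [InnerProductSpace ℝ H]
    (x y z : H) : H := (1/2 : ℝ) • (⟪x, y⟫ • z + ⟪z, y⟫ • x)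

section TripleProduct

variable {H : Type*} [NormedAddCommGroup H] [InnerProductSpace ℝ H]

theorem tpI_self (x : H) : tpI x x x = ⟪x, x⟫ • x := by
  rw [tpI]
  module

theorem two_smul_tpI_add_tpI (x y : H) :
    (2 : ℝ) • tpI y x x + tpI x y x = ⟪x, x⟫ • y + (2 * ⟪y, x⟫) • x := by
  simp only [tpI, real_inner_comm x y]
  module

theorem inner_map_self_eq_zero_of_map_tpI_self {T : H →ₗ[ℝ] H} {x : H}
    (hx : T (tpI x x x) = (2 : ℝ) • tpI (T x) x x + tpI x (T x) x) :
    ⟪T x, x⟫ = 0 := by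
  rw [tpI_self, map_smul, two_smul_tpI_add_tpI, left_eq_add, smul_eq_zero] at hx
  rcases hx with hTx | rfl
  · linarith
  · exact inner_zero_right _

end TripleProduct

theorem stmt_0 {H : Type*} [NormedAddCommGroup H] [InnerProductSpace ℝ H]
    (T : H →L[ℝ] H)
    (h : ∀ x : H, T (tpI x x x) = (2 : ℝ) • tpI (T x) x x + tpI x (T x) x) :
    ∀ x : H, ⟪T x, x⟫ = 0 :=
  fun x => inner_map_self_eq_zero_of_map_tpI_self (T := T.toLinearMap) (h x)
end

section
/- Let H be a real Hilbert space with the spin triple product {x,y,z} = ⟨x,y⟩z + ⟨z,y⟩x - ⟨x,z⟩y. If a bounded linear map T : H → H satisfies T{x,x,x} = 2{T x, x, x} + {x, T x, x} for all x ∈ H, then ⟨x, T x⟩ = 0 for all x ∈ H (i.e. T is skew-adjoint). -/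
open RealInnerProductSpace

noncomputable def tpS {H : Type*} [NormedAddCommGroup H] [InnerProductSpace ℝ H]
    (x y z : H) : H := ⟪x, y⟫ • z + ⟪z, y⟫ • x - ⟪x, z⟫ • y

section TripleProduct

variable {H : Type*} [NormedAddCommGroup H] [InnerProductSpace ℝ H]

theorem tpS_left_self_self (y x : H) : tpS y x x = ⟪x, x⟫ • y := by
  simp only [tpS, real_inner_comm x y]
  abel

theorem tpS_self_left_self (x y : H) : tpS x y x = (2 * ⟪x, y⟫) • x - ⟪x, x⟫ • y := by
  simp only [tpS]
  module

theorem tpS_self_self_self (x : H) : tpS x x x = ⟪x, x⟫ • x :=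
  tpS_left_self_self x x

-- The terms `⟪x, x⟫ • T x` on the two sides cancel, leaving `2 ⟪x, T x⟫ • x = 0`.
theorem inner_self_map_smul_eq_zero_of_tpS (T : H →ₗ[ℝ] H) {x : H}
    (hx : T (tpS x x x) = (2 : ℝ) • tpS (T x) x x + tpS x (T x) x) :
    ⟪x, T x⟫ • x = 0 := by
  rw [tpS_self_self_self, tpS_left_self_self, tpS_self_left_self, map_smul] at hx
  linear_combination (norm := module) (-2⁻¹ : ℝ) • hx

theorem inner_self_map_eq_zero_of_tpS (T : H →ₗ[ℝ] H) {x : H}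
    (hx : T (tpS x x x) = (2 : ℝ) • tpS (T x) x x + tpS x (T x) x) :
    ⟪x, T x⟫ = 0 := by
  rcases eq_or_ne x 0 with rfl | hne
  · simp
  · exact (smul_eq_zero.mp (inner_self_map_smul_eq_zero_of_tpS T hx)).resolve_right hne

end TripleProduct

theorem stmt_2 {H : Type*} [NormedAddCommGroup H] [InnerProductSpace ℝ H]
    (T : H →L[ℝ] H)
    (h : ∀ x : H, T (tpS x x x) = (2 : ℝ) • tpS (T x) x x + tpS x (T x) x) :
    ∀ x : H, ⟪x, T x⟫ = 0 :=
  fun x => inner_self_map_eq_zero_of_tpS T.toLinearMap (h x)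
end

section
/- Let H be a real Hilbert space with triple product {x,y,z} = (1/2)(⟨x,y⟩z + ⟨z,y⟩x). For every bounded linear T : H → H with T{x,x,x} = 2{T x,x,x} + {x,T x,x} for all x, T is a triple derivation: T{x,y,z} = {T x,y,z} + {x,T y,z} + {x,y,T z} for all x, y, z. -/
/-!
Expanding both sides of the diagonal identity leaves `2 ⟪T x, x⟫ • x = 0`, so `⟪T x, x⟫ = 0`
for every `x`. Polarizing this gives `⟪T a, b⟫ = -⟪a, T b⟫`, and for a skew-adjoint `T` the
Leibniz rule is a direct computation: skewness makes `⟪T x, y⟫ • z` and `⟪T z, y⟫ • x` cancel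
the terms `⟪x, T y⟫ • z` and `⟪z, T y⟫ • x` coming from `{x, T y, z}`.
-/

open RealInnerProductSpace

section

variable {H : Type*} [NormedAddCommGroup H] [InnerProductSpace ℝ H]

theorem inner_map_self_eq_zero_of_tpI_diag (T : H →ₗ[ℝ] H) {x : H}
    (h : T (tpI x x x) = (2 : ℝ) • tpI (T x) x x + tpI x (T x) x) : ⟪T x, x⟫ = 0 := by
  simp only [tpI, map_smul, map_add, real_inner_comm (T x) x] at h
  have hx : ((2 : ℝ) * ⟪T x, x⟫) • x = 0 := by
    linear_combination (norm := module) -h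
  rcases smul_eq_zero.mp hx with h0 | rfl
  · linarith
  · exact inner_zero_right _

theorem inner_map_left_eq_neg_of_inner_map_self_eq_zero (T : H →ₗ[ℝ] H)
    (h : ∀ x, ⟪T x, x⟫ = 0) (a b : H) : ⟪T a, b⟫ = -⟪a, T b⟫ := by
  have hab := h (a + b)
  simp only [map_add, inner_add_left, inner_add_right, h a, h b] at hab
  linarith [real_inner_comm a (T b)]

theorem map_tpI_of_inner_map_left_eq_neg (T : H →ₗ[ℝ] H)
    (hT : ∀ a b, ⟪T a, b⟫ = -⟪a, T b⟫) (x y z : H) :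
    T (tpI x y z) = tpI (T x) y z + tpI x (T y) z + tpI x y (T z) := by
  simp only [tpI, map_smul, map_add, hT x y, hT z y]
  module

end

theorem stmt_10 {H : Type*} [NormedAddCommGroup H] [InnerProductSpace ℝ H]
    (T : H →L[ℝ] H)
    (h : ∀ x : H, T (tpI x x x) = (2 : ℝ) • tpI (T x) x x + tpI x (T x) x) :
    ∀ x y z : H, T (tpI x y z) = tpI (T x) y z + tpI x (T y) z + tpI x y (T z) :=
  map_tpI_of_inner_map_left_eq_neg T.toLinearMap
    (inner_map_left_eq_neg_of_inner_map_self_eq_zero T.toLinearMap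
      fun x => inner_map_self_eq_zero_of_tpI_diag T.toLinearMap (h x))
end
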